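/- arXiv:1502.03356 — 5 statements merged into one kernel-verified Lean document; each statement's English description precedes it below -/
import Mathlib

section
/- Basic Perturbation Lemma: Let R be a commutative ring, and let (C_n)_{n∈ℤ} and (D_n)_{n∈ℤ} be families of R-modules equipped with R-linear maps d_C : C_n → C_{n−1} and d_D : D_n → D_{n−1} with d_C∘d_C = 0 and d_D∘d_D = 0, together with R-linear maps f_n : C_n → D_n, g_n : D_n → C_n and h_n : C_n → C_{n+1} satisfying, in every degree: d_D∘f = f∘d_C, d_C∘g = g∘d_D, d_C∘h + h∘d_C = g∘f − id_C, f∘g = id_D, f∘h = 0, h∘h = 0, and h∘g = 0. Let t_n : C_n → C_{n−1} be R-linear maps such that (d_C + t)∘(d_C + t) = 0, and assume that in every degree n the endomorphism id − h∘t of C_n is invertible. Define Σ = t∘(id − h∘t)⁻¹, and set t' = f∘Σ∘g, f' = f + f∘Σ∘h, g' = g + h∘Σ∘g, h' = h + h∘Σ∘h. Then in every degree: (d_D + t')∘(d_D + t') = 0, (d_D + t')∘f' = f'∘(d_C + t), (d_C + t)∘g' = g'∘(d_D + t'), (d_C + t)∘h' + h'∘(d_C + t) = g'∘f' − id_C,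 f'∘g' = id_D, f'∘h' = 0, h'∘h' = 0, and h'∘g' = 0. -/
/-- Basic Perturbation Lemma. Gradings are indexed by `ℤ`; the differentials
`dC`, `dD` and the perturbation `t` lower degree by one, `h` raises degree by one. -/
theorem stmt_0 (R : Type*) [CommRing R]
    (C D : ℤ → Type*) [∀ n, AddCommGroup (C n)] [∀ n, Module R (C n)]
    [∀ n, AddCommGroup (D n)] [∀ n, Module R (D n)]
    (dC : ∀ n : ℤ, C (n + 1) →ₗ[R] C n) (dD : ∀ n : ℤ, D (n + 1) →ₗ[R] D n)
    (f : ∀ n : ℤ, C n →ₗ[R] D n) (g : ∀ n : ℤ, D n →ₗ[R] C n)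
    (h : ∀ n : ℤ, C n →ₗ[R] C (n + 1)) (t : ∀ n : ℤ, C (n + 1) →ₗ[R] C n)
    -- the differentials square to zero
    (hdC : ∀ n, dC n ∘ₗ dC (n + 1) = 0)
    (hdD : ∀ n, dD n ∘ₗ dD (n + 1) = 0)
    -- `f` and `g` are chain maps
    (hf : ∀ n, dD n ∘ₗ f (n + 1) = f n ∘ₗ dC n)
    (hg : ∀ n, dC n ∘ₗ g (n + 1) = g n ∘ₗ dD n)
    -- homotopy identity `d_C h + h d_C = g f − id`
    (hhomotopy : ∀ n,
      dC (n + 1) ∘ₗ h (n + 1) + h n ∘ₗ dC n = g (n + 1) ∘ₗ f (n + 1) - LinearMap.id)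
    -- `f g = id` and the side conditions `f h = 0`, `h h = 0`, `h g = 0`
    (hfg : ∀ n, f n ∘ₗ g n = LinearMap.id)
    (hfh : ∀ n, f (n + 1) ∘ₗ h n = 0)
    (hhh : ∀ n, h (n + 1) ∘ₗ h n = 0)
    (hhg : ∀ n, h n ∘ₗ g n = 0)
    -- `t` is a perturbation: `(d_C + t)² = 0`
    (hpert : ∀ n, (dC n + t n) ∘ₗ (dC (n + 1) + t (n + 1)) = 0)
    -- `id − h∘t` is invertible in every degree, with two-sided inverse `inv`
    (inv : ∀ n : ℤ, C (n + 1) →ₗ[R] C (n + 1))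
    (hinv1 : ∀ n, (LinearMap.id - h n ∘ₗ t n) ∘ₗ inv n = LinearMap.id)
    (hinv2 : ∀ n, inv n ∘ₗ (LinearMap.id - h n ∘ₗ t n) = LinearMap.id)
    -- `Σ = t ∘ (id − h∘t)⁻¹`
    (S : ∀ n : ℤ, C (n + 1) →ₗ[R] C n)
    (hS : ∀ n, S n = t n ∘ₗ inv n)
    -- `t' = f ∘ Σ ∘ g`
    (t' : ∀ n : ℤ, D (n + 1) →ₗ[R] D n)
    (ht' : ∀ n, t' n = f n ∘ₗ S n ∘ₗ g (n + 1))
    -- `f' = f + f ∘ Σ ∘ h`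
    (f' : ∀ n : ℤ, C n →ₗ[R] D n)
    (hf' : ∀ n, f' n = f n + f n ∘ₗ S n ∘ₗ h n)
    -- `g' = g + h ∘ Σ ∘ g`
    (g' : ∀ n : ℤ, D (n + 1) →ₗ[R] C (n + 1))
    (hg' : ∀ n, g' n = g (n + 1) + h n ∘ₗ S n ∘ₗ g (n + 1))
    -- `h' = h + h ∘ Σ ∘ h`
    (h' : ∀ n : ℤ, C n →ₗ[R] C (n + 1))
    (hh' : ∀ n, h' n = h n + h n ∘ₗ S n ∘ₗ h n) :
    -- conclusions, in every degree
    (∀ n, (dD n + t' n) ∘ₗ (dD (n + 1) + t' (n + 1)) = 0) ∧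
    (∀ n, (dD n + t' n) ∘ₗ f' (n + 1) = f' n ∘ₗ (dC n + t n)) ∧
    (∀ n, (dC (n + 1) + t (n + 1)) ∘ₗ g' (n + 1) = g' n ∘ₗ (dD (n + 1) + t' (n + 1))) ∧
    (∀ n, (dC (n + 1) + t (n + 1)) ∘ₗ h' (n + 1) + h' n ∘ₗ (dC n + t n)
        = g' n ∘ₗ f' (n + 1) - LinearMap.id) ∧
    (∀ n, f' (n + 1) ∘ₗ g' n = LinearMap.id) ∧
    (∀ n, f' (n + 1) ∘ₗ h' n = 0) ∧
    (∀ n, h' (n + 1) ∘ₗ h' n = 0) ∧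
    (∀ n, h' (n + 1) ∘ₗ g' n = 0) := by
  have Hdd : ∀ (k : ℤ) (z : C (k + 1 + 1)), dC k (dC (k + 1) z) = 0 := fun k z => by
    simpa using LinearMap.congr_fun (hdC k) z
  have Hbb : ∀ (k : ℤ) (z : D (k + 1 + 1)), dD k (dD (k + 1) z) = 0 := fun k z => by
    simpa using LinearMap.congr_fun (hdD k) z
  have Hbf : ∀ (k : ℤ) (z : C (k + 1)), dD k (f (k + 1) z) = f k (dC k z) := fun k z => by
    simpa using LinearMap.congr_fun (hf k) z
  have Hdg : ∀ (k : ℤ) (z : D (k + 1)), dC k (g (k + 1) z) = g k (dD k z) := fun k z => by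
    simpa using LinearMap.congr_fun (hg k) z
  have Hhom : ∀ (k : ℤ) (z : C (k + 1)),
      dC (k + 1) (h (k + 1) z) + h k (dC k z) = g (k + 1) (f (k + 1) z) - z := fun k z => by
    simpa using LinearMap.congr_fun (hhomotopy k) z
  have Hfg : ∀ (k : ℤ) (z : D k), f k (g k z) = z := fun k z => by
    simpa using LinearMap.congr_fun (hfg k) z
  have Hfh : ∀ (k : ℤ) (z : C k), f (k + 1) (h k z) = 0 := fun k z => by
    simpa using LinearMap.congr_fun (hfh k) z
  have Hhh : ∀ (k : ℤ) (z : C k), h (k + 1) (h k z) = 0 := fun k z => by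
    simpa using LinearMap.congr_fun (hhh k) z
  have Hhg : ∀ (k : ℤ) (z : D k), h k (g k z) = 0 := fun k z => by
    simpa using LinearMap.congr_fun (hhg k) z
  have Hpert : ∀ (k : ℤ) (z : C (k + 1 + 1)),
      dC k (t (k + 1) z) + t k (dC (k + 1) z) + t k (t (k + 1) z) = 0 := fun k z => by
    have h1 := LinearMap.congr_fun (hpert k) z
    have h2 := LinearMap.congr_fun (hdC k) z
    simp only [LinearMap.add_apply, LinearMap.comp_apply, LinearMap.zero_apply, map_add] at h1 h2
    linear_combination (norm := abel1) h1 - h2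
  have HS1 : ∀ (k : ℤ) (z : C (k + 1)), S k z = t k z + t k (h k (S k z)) := fun k z => by
    have h1 := LinearMap.congr_fun (hinv1 k) z
    simp only [LinearMap.sub_apply, LinearMap.comp_apply, LinearMap.id_apply] at h1
    have h1' : inv k z = z + h k (t k (inv k z)) := eq_add_of_sub_eq h1
    simp only [hS k, LinearMap.comp_apply]
    conv_lhs => rw [h1']
    rw [map_add]
  have HS2 : ∀ (k : ℤ) (z : C (k + 1)), S k z = t k z + S k (h k (t k z)) := fun k z => by
    have h1 := LinearMap.congr_fun (hinv2 k) z
    simp only [LinearMap.comp_apply, LinearMap.sub_apply, LinearMap.id_apply, map_sub] at h1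
    have h1' : inv k z = z + inv k (h k (t k z)) := eq_add_of_sub_eq h1
    simp only [hS k, LinearMap.comp_apply]
    conv_lhs => rw [h1']
    rw [map_add]
  refine ⟨?_, ?_, ?_, ?_, ?_, ?_, ?_, ?_⟩
  · intro n
    ext x
    simp only [ht', hf', hg', hh', LinearMap.add_apply, LinearMap.sub_apply, LinearMap.comp_apply, LinearMap.zero_apply, LinearMap.id_apply, map_add]
    linear_combination (norm := (simp only [map_add, map_sub, map_neg, map_zero]; try abel1))
      (Hbb n (x))
      - congrArg (fun z => f n (t n (z))) (Hdg (n + 1) (x))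
      - congrArg (fun z => f n (S n (h n (t n (z))))) (Hdg (n + 1) (x))
      + congrArg (fun z => f n (z)) (Hpert n (g (n + 1 + 1) (x)))
      + congrArg (fun z => f n (S n (h n (z)))) (Hpert n (g (n + 1 + 1) (x)))
      + congrArg (fun z => f n (dC n (z))) (HS1 (n + 1) (g (n + 1 + 1) (x)))
      + congrArg (fun z => f n (t n (z))) (HS1 (n + 1) (g (n + 1 + 1) (x)))
      + congrArg (fun z => f n (S n (h n (dC n (z))))) (HS1 (n + 1) (g (n + 1 + 1) (x)))
      + congrArg (fun z => f n (S n (h n (t n (z))))) (HS1 (n + 1) (g (n + 1 + 1) (x)))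
      + congrArg (fun z => f n (z)) (HS2 n (g (n + 1) (dD (n + 1) (x))))
      + (Hbf n (S (n + 1) (g (n + 1 + 1) (x))))
      - congrArg (fun z => f n (t n (z))) (Hhom n (S (n + 1) (g (n + 1 + 1) (x))))
      - congrArg (fun z => f n (S n (h n (t n (z))))) (Hhom n (S (n + 1) (g (n + 1 + 1) (x))))
      + congrArg (fun z => f n (z)) (Hpert n (h (n + 1) (S (n + 1) (g (n + 1 + 1) (x)))))
      + congrArg (fun z => f n (S n (h n (z)))) (Hpert n (h (n + 1) (S (n + 1) (g (n + 1 + 1) (x)))))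
      - congrArg (fun z => f n (z)) (HS2 n (h n (dC n (S (n + 1) (g (n + 1 + 1) (x))))))
      + congrArg (fun z => f n (z)) (HS2 n (g (n + 1) (f (n + 1) (S (n + 1) (g (n + 1 + 1) (x))))))
  · intro n
    ext x
    simp only [ht', hf', hg', hh', LinearMap.add_apply, LinearMap.sub_apply, LinearMap.comp_apply, LinearMap.zero_apply, LinearMap.id_apply, map_add]
    linear_combination (norm := (simp only [map_add, map_sub, map_neg, map_zero]; try abel1))
      (Hbf n (x))
      - congrArg (fun z => f n (t n (z))) (Hhom n (x))
      - congrArg (fun z => f n (S n (h n (t n (z))))) (Hhom n (x))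
      + congrArg (fun z => f n (z)) (Hpert n (h (n + 1) (x)))
      + congrArg (fun z => f n (S n (h n (z)))) (Hpert n (h (n + 1) (x)))
      + congrArg (fun z => f n (dC n (z))) (HS1 (n + 1) (h (n + 1) (x)))
      + congrArg (fun z => f n (t n (z))) (HS1 (n + 1) (h (n + 1) (x)))
      + congrArg (fun z => f n (S n (h n (dC n (z))))) (HS1 (n + 1) (h (n + 1) (x)))
      + congrArg (fun z => f n (S n (h n (t n (z))))) (HS1 (n + 1) (h (n + 1) (x)))
      - congrArg (fun z => f n (z)) (HS2 n (h n (dC n (x))))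
      + congrArg (fun z => f n (z)) (HS2 n (g (n + 1) (f (n + 1) (x))))
      + (Hbf n (S (n + 1) (h (n + 1) (x))))
      - congrArg (fun z => f n (t n (z))) (Hhom n (S (n + 1) (h (n + 1) (x))))
      - congrArg (fun z => f n (S n (h n (t n (z))))) (Hhom n (S (n + 1) (h (n + 1) (x))))
      + congrArg (fun z => f n (z)) (Hpert n (h (n + 1) (S (n + 1) (h (n + 1) (x)))))
      + congrArg (fun z => f n (S n (h n (z)))) (Hpert n (h (n + 1) (S (n + 1) (h (n + 1) (x)))))
      - congrArg (fun z => f n (z)) (HS2 n (h n (dC n (S (n + 1) (h (n + 1) (x))))))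
      + congrArg (fun z => f n (z)) (HS2 n (g (n + 1) (f (n + 1) (S (n + 1) (h (n + 1) (x))))))
  · intro n
    ext x
    simp only [ht', hf', hg', hh', LinearMap.add_apply, LinearMap.sub_apply, LinearMap.comp_apply, LinearMap.zero_apply, LinearMap.id_apply, map_add]
    linear_combination (norm := (simp only [map_add, map_sub, map_neg, map_zero]; try abel1))
      (Hdg (n + 1) (x))
      + congrArg (fun z => h n (t n (z))) (Hdg (n + 1) (x))
      + congrArg (fun z => h n (S n (h n (t n (z))))) (Hdg (n + 1) (x))
      - congrArg (fun z => h n (z)) (Hpert n (g (n + 1 + 1) (x)))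
      - congrArg (fun z => h n (S n (h n (z)))) (Hpert n (g (n + 1 + 1) (x)))
      - (HS1 (n + 1) (g (n + 1 + 1) (x)))
      - congrArg (fun z => h n (dC n (z))) (HS1 (n + 1) (g (n + 1 + 1) (x)))
      - congrArg (fun z => h n (t n (z))) (HS1 (n + 1) (g (n + 1 + 1) (x)))
      - congrArg (fun z => h n (S n (h n (dC n (z))))) (HS1 (n + 1) (g (n + 1 + 1) (x)))
      - congrArg (fun z => h n (S n (h n (t n (z))))) (HS1 (n + 1) (g (n + 1 + 1) (x)))
      - congrArg (fun z => h n (z)) (HS2 n (g (n + 1) (dD (n + 1) (x))))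
      + (Hhom n (S (n + 1) (g (n + 1 + 1) (x))))
      + congrArg (fun z => h n (t n (z))) (Hhom n (S (n + 1) (g (n + 1 + 1) (x))))
      + congrArg (fun z => h n (S n (h n (t n (z))))) (Hhom n (S (n + 1) (g (n + 1 + 1) (x))))
      - congrArg (fun z => h n (z)) (Hpert n (h (n + 1) (S (n + 1) (g (n + 1 + 1) (x)))))
      - congrArg (fun z => h n (S n (h n (z)))) (Hpert n (h (n + 1) (S (n + 1) (g (n + 1 + 1) (x)))))
      + congrArg (fun z => h n (z)) (HS2 n (h n (dC n (S (n + 1) (g (n + 1 + 1) (x))))))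
      - congrArg (fun z => h n (z)) (HS2 n (g (n + 1) (f (n + 1) (S (n + 1) (g (n + 1 + 1) (x))))))
  · intro n
    ext x
    simp only [ht', hf', hg', hh', LinearMap.add_apply, LinearMap.sub_apply, LinearMap.comp_apply, LinearMap.zero_apply, LinearMap.id_apply, map_add]
    linear_combination (norm := (simp only [map_add, map_sub, map_neg, map_zero]; try abel1))
      (Hhom n (x))
      + congrArg (fun z => h n (t n (z))) (Hhom n (x))
      + congrArg (fun z => h n (S n (h n (t n (z))))) (Hhom n (x))
      - congrArg (fun z => h n (z)) (Hpert n (h (n + 1) (x)))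
      - congrArg (fun z => h n (S n (h n (z)))) (Hpert n (h (n + 1) (x)))
      - (HS1 (n + 1) (h (n + 1) (x)))
      - congrArg (fun z => h n (dC n (z))) (HS1 (n + 1) (h (n + 1) (x)))
      - congrArg (fun z => h n (t n (z))) (HS1 (n + 1) (h (n + 1) (x)))
      - congrArg (fun z => h n (S n (h n (dC n (z))))) (HS1 (n + 1) (h (n + 1) (x)))
      - congrArg (fun z => h n (S n (h n (t n (z))))) (HS1 (n + 1) (h (n + 1) (x)))
      + congrArg (fun z => h n (z)) (HS2 n (h n (dC n (x))))
      - congrArg (fun z => h n (z)) (HS2 n (g (n + 1) (f (n + 1) (x))))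
      + (Hhom n (S (n + 1) (h (n + 1) (x))))
      + congrArg (fun z => h n (t n (z))) (Hhom n (S (n + 1) (h (n + 1) (x))))
      + congrArg (fun z => h n (S n (h n (t n (z))))) (Hhom n (S (n + 1) (h (n + 1) (x))))
      - congrArg (fun z => h n (z)) (Hpert n (h (n + 1) (S (n + 1) (h (n + 1) (x)))))
      - congrArg (fun z => h n (S n (h n (z)))) (Hpert n (h (n + 1) (S (n + 1) (h (n + 1) (x)))))
      + congrArg (fun z => h n (z)) (HS2 n (h n (dC n (S (n + 1) (h (n + 1) (x))))))
      - congrArg (fun z => h n (z)) (HS2 n (g (n + 1) (f (n + 1) (S (n + 1) (h (n + 1) (x))))))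
  · intro n
    ext x
    simp only [ht', hf', hg', hh', LinearMap.add_apply, LinearMap.sub_apply, LinearMap.comp_apply, LinearMap.zero_apply, LinearMap.id_apply, map_add]
    linear_combination (norm := (simp only [map_add, map_sub, map_neg, map_zero]; try abel1))
      (Hfg (n + 1) (x))
      + congrArg (fun z => f (n + 1) (S (n + 1) (z))) (Hhg (n + 1) (x))
      + (Hfh n (S n (g (n + 1) (x))))
      + congrArg (fun z => f (n + 1) (S (n + 1) (z))) (Hhh n (S n (g (n + 1) (x))))
  · intro n
    ext x
    simp only [ht', hf', hg', hh', LinearMap.add_apply, LinearMap.sub_apply, LinearMap.comp_apply, LinearMap.zero_apply, LinearMap.id_apply, map_add]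
    linear_combination (norm := (simp only [map_add, map_sub, map_neg, map_zero]; try abel1))
      (Hfh n (x))
      + congrArg (fun z => f (n + 1) (S (n + 1) (z))) (Hhh n (x))
      + (Hfh n (S n (h n (x))))
      + congrArg (fun z => f (n + 1) (S (n + 1) (z))) (Hhh n (S n (h n (x))))
  · intro n
    ext x
    simp only [ht', hf', hg', hh', LinearMap.add_apply, LinearMap.sub_apply, LinearMap.comp_apply, LinearMap.zero_apply, LinearMap.id_apply, map_add]
    linear_combination (norm := (simp only [map_add, map_sub, map_neg, map_zero]; try abel1))
      (Hhh n (x))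
      + congrArg (fun z => h (n + 1) (S (n + 1) (z))) (Hhh n (x))
      + (Hhh n (S n (h n (x))))
      + congrArg (fun z => h (n + 1) (S (n + 1) (z))) (Hhh n (S n (h n (x))))
  · intro n
    ext x
    simp only [ht', hf', hg', hh', LinearMap.add_apply, LinearMap.sub_apply, LinearMap.comp_apply, LinearMap.zero_apply, LinearMap.id_apply, map_add]
    linear_combination (norm := (simp only [map_add, map_sub, map_neg, map_zero]; try abel1))
      (Hhg (n + 1) (x))
      + congrArg (fun z => h (n + 1) (S (n + 1) (z))) (Hhg (n + 1) (x))
      + (Hhh n (S n (g (n + 1) (x))))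
      + congrArg (fun z => h (n + 1) (S (n + 1) (z))) (Hhh n (S n (g (n + 1) (x))))
end

section
/- Fix integers m ≥ 1 and r ≥ 1. Consider the ℚ-vector space of functions F = {f : (ZMod r → Fin m) → ℚ | f(σw) = −f(w) for every word w}, where σ is the rotation operator on words. Then the dimension of F over ℚ equals the number of necklaces of length r over the m-letter alphabet whose minimal period is even. -/
namespace Stmt8Aux

variable {m r : ℕ}

def sh (k : ZMod r) (w : ZMod r → Fin m) : ZMod r → Fin m := fun i => w (i + k)

lemma sh_add (a b : ZMod r) (w : ZMod r → Fin m) : sh a (sh b w) = sh (a + b) w := by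
  funext i; simp [sh, add_assoc]

lemma sh_zero (w : ZMod r → Fin m) : sh 0 w = w := by funext i; simp [sh]

lemma sh_injective (a : ZMod r) : Function.Injective (sh (m := m) a) := by
  intro u v h
  have := congrArg (sh (-a)) h
  rwa [sh_add, sh_add, neg_add_cancel, sh_zero, sh_zero] at this

noncomputable def per (w : ZMod r → Fin m) : ℕ :=
  sInf {p : ℕ | 0 < p ∧ ∀ i : ZMod r, w (i + (p : ZMod r)) = w i}

lemma mem_perSet [NeZero r] (w : ZMod r → Fin m) :
    r ∈ {p : ℕ | 0 < p ∧ ∀ i : ZMod r, w (i + (p : ZMod r)) = w i} :=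
  ⟨Nat.pos_of_ne_zero (NeZero.ne r), fun i => by simp [ZMod.natCast_self]⟩

lemma per_spec [NeZero r] (w : ZMod r → Fin m) :
    0 < per w ∧ ∀ i : ZMod r, w (i + (per w : ZMod r)) = w i :=
  Nat.sInf_mem ⟨r, mem_perSet w⟩

lemma sh_per [NeZero r] (w : ZMod r → Fin m) : sh ((per w : ℕ) : ZMod r) w = w :=
  funext fun i => (per_spec w).2 i

lemma per_dvd [NeZero r] {w : ZMod r → Fin m} {k : ℕ}
    (h : sh ((k : ℕ) : ZMod r) w = w) : per w ∣ k := by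
  have hmul : ∀ q : ℕ, sh ((per w * q : ℕ) : ZMod r) w = w := by
    intro q
    induction q with
    | zero => simpa using sh_zero w
    | succ q ih =>
      have hc : ((per w * (q + 1) : ℕ) : ZMod r) = (per w : ZMod r) + ((per w * q : ℕ) : ZMod r) := by
        push_cast; ring
      rw [hc, ← sh_add, ih, sh_per]
  have key : sh ((k % per w : ℕ) : ZMod r) w = w := by
    have hc : ((k : ℕ) : ZMod r)
        = ((k % per w : ℕ) : ZMod r) + ((per w * (k / per w) : ℕ) : ZMod r) := by
      conv_lhs => rw [← Nat.mod_add_div k (per w)]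
      push_cast; ring
    rw [hc, ← sh_add, hmul] at h
    exact h
  by_contra hnd
  have hne : k % per w ≠ 0 := fun h0 => hnd (Nat.dvd_of_mod_eq_zero h0)
  have hmem : k % per w ∈ {p : ℕ | 0 < p ∧ ∀ i : ZMod r, w (i + (p : ZMod r)) = w i} :=
    ⟨Nat.pos_of_ne_zero hne, fun i => congrFun key i⟩
  have h2 : per w ≤ k % per w := Nat.sInf_le hmem
  have hlt := Nat.mod_lt k (per_spec w).1
  omega

lemma per_sh (a : ZMod r) (w : ZMod r → Fin m) : per (sh a w) = per w := by
  unfold per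
  congr 1
  ext p
  simp only [Set.mem_setOf_eq, sh, and_congr_right_iff]
  intro _
  constructor
  · intro h i
    have := h (i - a)
    convert this using 2 <;> ring
  · intro h i
    have := h (i + a)
    convert this using 2 <;> ring

lemma exists_nat_cast_eq [NeZero r] (z : ℤ) : ∃ n : ℕ, ((n : ℕ) : ZMod r) = (z : ZMod r) := by
  refine ⟨(z % r).toNat, ?_⟩
  have hr0 : (r : ℤ) ≠ 0 := by exact_mod_cast NeZero.ne r
  have h0 : 0 ≤ z % r := Int.emod_nonneg z hr0
  have h1 : (((z % r).toNat : ℕ) : ZMod r) = ((z % r : ℤ) : ZMod r) := by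
    rw [← Int.cast_natCast, Int.toNat_of_nonneg h0]
  rw [h1]
  rw [ZMod.intCast_eq_intCast_iff]
  exact (Int.emod_emod_of_dvd z dvd_rfl)

abbrev S (m r : ℕ) := {w : ZMod r → Fin m // Even (per w)}

def rel (w w' : S m r) : Prop :=
  ∃ k : ℤ, ∀ i : ZMod r, w'.1 i = w.1 (i + (k : ZMod r))

lemma rel_equivalence : Equivalence (@rel m r) := by
  constructor
  · intro w; exact ⟨0, fun i => by simp⟩
  · rintro w w' ⟨k, hk⟩
    refine ⟨-k, fun i => ?_⟩
    rw [hk]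
    congr 1
    push_cast
    ring
  · rintro w w' w'' ⟨k, hk⟩ ⟨k', hk'⟩
    refine ⟨k + k', fun i => ?_⟩
    rw [hk', hk]
    congr 1
    push_cast
    ring

lemma rel_out_mk (s : S m r) : rel (Quot.out (Quot.mk rel s)) s := by
  have h := Quot.out_eq (Quot.mk rel s)
  rw [Quot.eq] at h
  exact (Equivalence.eqvGen_iff rel_equivalence).mp h

/-- parity well-definedness -/
lemma parity [NeZero r] {w : ZMod r → Fin m} (hw : Even (per w)) {k1 k2 : ℕ}
    (h : sh ((k1 : ℕ) : ZMod r) w = sh ((k2 : ℕ) : ZMod r) w) :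
    ((-1 : ℚ) ^ k1 = (-1 : ℚ) ^ k2) := by
  -- reduce to ordered case
  have aux : ∀ k1 k2 : ℕ, k2 ≤ k1 →
      sh ((k1 : ℕ) : ZMod r) w = sh ((k2 : ℕ) : ZMod r) w →
      ((-1 : ℚ) ^ k1 = (-1 : ℚ) ^ k2) := by
    intro k1 k2 hle h
    have h2 : sh ((k2 : ℕ) : ZMod r) (sh (((k1 - k2 : ℕ) : ℕ) : ZMod r) w)
        = sh ((k2 : ℕ) : ZMod r) w := by
      rw [sh_add, ← h]
      congr 1
      have : ((k1 - k2 : ℕ) : ZMod r) + (k2 : ZMod r) = (k1 : ZMod r) := by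
        rw [← Nat.cast_add, Nat.sub_add_cancel hle]
      rw [← this]; ring
    have h3 : sh (((k1 - k2 : ℕ) : ℕ) : ZMod r) w = w := sh_injective _ h2
    have h4 : per w ∣ k1 - k2 := per_dvd h3
    obtain ⟨c, hc⟩ : 2 ∣ k1 - k2 := dvd_trans hw.two_dvd h4
    have : k1 = k2 + 2 * c := by omega
    subst this
    rw [pow_add, pow_mul]
    norm_num
  rcases le_total k2 k1 with hle | hle
  · exact aux k1 k2 hle h
  · exact (aux k2 k1 hle h.symm).symm

lemma exk [NeZero r] (w : ZMod r → Fin m) (h : Even (per w)) :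
    ∃ n : ℕ, w = sh ((n : ℕ) : ZMod r) (Quot.out (Quot.mk (@rel m r) ⟨w, h⟩)).1 := by
  obtain ⟨z, hz⟩ := rel_out_mk (⟨w, h⟩ : S m r)
  obtain ⟨n, hn⟩ := exists_nat_cast_eq (r := r) z
  refine ⟨n, funext fun i => ?_⟩
  show w i = (Quot.out (Quot.mk (@rel m r) ⟨w, h⟩)).1 (i + ((n : ℕ) : ZMod r))
  rw [hn]
  exact hz i

lemma sh_zero' (w : ZMod r → Fin m) : sh (((0:ℕ)) : ZMod r) w = w := by
  simpa using sh_zero w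

noncomputable def fg [NeZero r] (g : Quot (@rel m r) → ℚ) (w : ZMod r → Fin m) : ℚ :=
  if h : Even (per w) then
    (-1 : ℚ) ^ (Nat.find (exk w h)) * g (Quot.mk rel ⟨w, h⟩)
  else 0

/-- key lemma A : fg is anti-invariant -/
lemma fg_anti [NeZero r] (g : Quot (@rel m r) → ℚ) (w : ZMod r → Fin m) :
    fg g (sh 1 w) = - fg g w := by
  by_cases h : Even (per w)
  · have h' : Even (per (sh (1 : ZMod r) w)) := by rwa [per_sh]
    -- same orbit
    have hrel : rel (⟨w, h⟩ : S m r) ⟨sh 1 w, h'⟩ := by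
      refine ⟨1, fun i => ?_⟩
      simp [sh]
    have hmk : Quot.mk (@rel m r) ⟨sh 1 w, h'⟩ = Quot.mk rel ⟨w, h⟩ :=
      (Quot.sound hrel).symm
    rw [fg, fg, dif_pos h, dif_pos h']
    set n := Nat.find (exk w h) with hn
    set n' := Nat.find (exk (sh 1 w) h') with hn'
    have hw1 : w = sh ((n : ℕ) : ZMod r) (Quot.out (Quot.mk (@rel m r) ⟨w, h⟩)).1 :=
      Nat.find_spec (exk w h)
    have hw2 : sh 1 w = sh ((n' : ℕ) : ZMod r) (Quot.out (Quot.mk (@rel m r) ⟨sh 1 w, h'⟩)).1 :=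
      Nat.find_spec (exk (sh 1 w) h')
    rw [hmk] at hw2
    set rep := (Quot.out (Quot.mk (@rel m r) ⟨w, h⟩)).1 with hrep
    have hrepEven : Even (per rep) := (Quot.out (Quot.mk (@rel m r) ⟨w, h⟩)).2
    have hw3 : sh ((n' : ℕ) : ZMod r) rep = sh (((n + 1 : ℕ) : ℕ) : ZMod r) rep := by
      rw [← hw2, hw1, sh_add]
      congr 1
      push_cast
      ring
    have hpar : ((-1 : ℚ) ^ n' = (-1 : ℚ) ^ (n + 1)) := parity hrepEven hw3
    rw [hmk, hpar]
    ring
  · have h' : ¬ Even (per (sh (1 : ZMod r) w)) := by rwa [per_sh]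
    rw [fg, fg, dif_neg h, dif_neg h']
    ring

/-- key lemma B : fg evaluates correctly at representatives -/
lemma fg_out [NeZero r] (g : Quot (@rel m r) → ℚ) (q : Quot (@rel m r)) :
    fg g (Quot.out q).1 = g q := by
  set w := (Quot.out q).1 with hw
  have h : Even (per w) := (Quot.out q).2
  have heta : (⟨w, h⟩ : S m r) = Quot.out q := rfl
  have hmk : Quot.mk (@rel m r) ⟨w, h⟩ = q := by rw [heta, Quot.out_eq]
  rw [fg, dif_pos h]
  have hfind : Nat.find (exk w h) = 0 := by
    rw [Nat.find_eq_zero, sh_zero', hmk]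
  rw [hfind, hmk]
  simp

end Stmt8Aux

open Stmt8Aux in
/-- The dimension over `ℚ` of the space `F = {f : (ZMod r → Fin m) → ℚ | f(σw) = −f(w)}`
(anti-invariants of the rotation action) equals the number of necklaces of length `r`
over the `m`-letter alphabet whose minimal period is even. -/
theorem stmt_8 (m r : ℕ) (hm : 1 ≤ m) (hr : 1 ≤ r)
    (F : Submodule ℚ ((ZMod r → Fin m) → ℚ))
    (hF : ∀ f : (ZMod r → Fin m) → ℚ,
      f ∈ F ↔ ∀ w : ZMod r → Fin m, f (fun i => w (i + 1)) = -f w) :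
    Module.finrank ℚ F =
      Nat.card (Quot (fun w w' : {w : ZMod r → Fin m //
          Even (sInf {p : ℕ | 0 < p ∧ ∀ i : ZMod r, w (i + (p : ZMod r)) = w i})} =>
        ∃ k : ℤ, ∀ i : ZMod r, w'.1 i = w.1 (i + (k : ZMod r)))) := by
  classical
  haveI : NeZero r := ⟨by omega⟩
  show Module.finrank ℚ F = Nat.card (Quot (@Stmt8Aux.rel m r))
  -- sign lemma for anti-invariant functions
  have hsign : ∀ f : (ZMod r → Fin m) → ℚ, f ∈ F →
      ∀ (k : ℕ) (w : ZMod r → Fin m), f (sh ((k : ℕ) : ZMod r) w) = (-1 : ℚ) ^ k * f w := by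
    intro f hf k
    induction k with
    | zero => intro w; rw [sh_zero']; ring
    | succ k ih =>
      intro w
      have h1 : sh (((k + 1 : ℕ) : ℕ) : ZMod r) w = sh 1 (sh ((k : ℕ) : ZMod r) w) := by
        rw [sh_add]; congr 1; push_cast; ring
      have h2 : f (sh 1 (sh ((k : ℕ) : ZMod r) w)) = - f (sh ((k : ℕ) : ZMod r) w) :=
        (hF f).mp hf (sh ((k : ℕ) : ZMod r) w)
      rw [h1, h2, ih w]; ring
  -- the evaluation map
  let Φ : F →ₗ[ℚ] (Quot (@Stmt8Aux.rel m r) → ℚ) :=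
    { toFun := fun f q => (f : (ZMod r → Fin m) → ℚ) (Quot.out q).1
      map_add' := fun f g => rfl
      map_smul' := fun c f => rfl }
  have hker : ∀ f : F, Φ f = 0 → f = 0 := by
    intro f hz
    ext w
    show (f : (ZMod r → Fin m) → ℚ) w = 0
    by_cases h : Even (per w)
    · obtain ⟨n, hn⟩ := exk w h
      have hq : Φ f (Quot.mk (@Stmt8Aux.rel m r) ⟨w, h⟩) = 0 := by rw [hz]; rfl
      rw [hn, hsign f.1 f.2 n _]
      show (-1 : ℚ) ^ n * Φ f (Quot.mk (@Stmt8Aux.rel m r) ⟨w, h⟩) = 0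
      rw [hq]; ring
    · have hodd : Odd (per w) := Nat.odd_iff.mpr (Nat.not_even_iff.mp h)
      have := hsign f.1 f.2 (per w) w
      rw [sh_per, hodd.neg_one_pow] at this
      linarith
  have hinj : Function.Injective Φ := by
    intro a b hab
    have : Φ (a - b) = 0 := by rw [map_sub, hab, sub_self]
    have := hker _ this
    exact sub_eq_zero.mp this
  have hsurj : Function.Surjective Φ := by
    intro g
    have hmem : fg g ∈ F := (hF _).mpr (fun w => fg_anti g w)
    exact ⟨⟨fg g, hmem⟩, funext fun q => fg_out g q⟩
  have e : F ≃ₗ[ℚ] (Quot (@Stmt8Aux.rel m r) → ℚ) :=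
    LinearEquiv.ofBijective Φ ⟨hinj, hsurj⟩
  rw [e.finrank_eq]
  haveI : Finite (Quot (@Stmt8Aux.rel m r)) := Quot.finite _
  haveI := Fintype.ofFinite (Quot (@Stmt8Aux.rel m r))
  rw [Module.finrank_pi, Nat.card_eq_fintype_card]
end

section
/- Fix integers m ≥ 2 and d ≥ 2, and fix two distinct letters 1 and 2 in the alphabet Fin m. Let R_c(d) be the number of words w : ZMod d → Fin m that contain a cyclic occurrence of the factor 12, i.e., for which there exists i ∈ ZMod d with w(i) = 1 and w(i+1) = 2. Let W_{12}(d) be the number of words v : Fin d → Fin m containing a linear occurrence of 12, i.e., for which there exists an index i with i+1 < d, v(i) = 1 and v(i+1) = 2, and let W_{¬12}(d) = m^d − W_{12}(d) be the number of length-d words with no linear occurrence of 12 (with W_{¬12}(0) = 1). Then R_c(d) = W_{12}(d) + W_{¬12}(d − 2). -/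
section Aux

variable {m d : ℕ}

/-- linear occurrence predicate -/
def LinOcc (x y : Fin m) (n : ℕ) (v : Fin n → Fin m) : Prop :=
  ∃ i : ℕ, ∃ h : i + 1 < n, v ⟨i, Nat.lt_of_succ_lt h⟩ = x ∧ v ⟨i + 1, h⟩ = y

/-- linear occurrence for cyclically indexed word -/
def LinOccZ (x y : Fin m) (d : ℕ) (w : ZMod d → Fin m) : Prop :=
  ∃ i : ℕ, ∃ _h : i + 1 < d, w (i : ZMod d) = x ∧ w ((i + 1 : ℕ) : ZMod d) = y

/-- cyclic occurrence -/
def CycOcc (x y : Fin m) (d : ℕ) (w : ZMod d → Fin m) : Prop :=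
  ∃ i : ZMod d, w i = x ∧ w (i + 1) = y

theorem linOccZ_to_cyc (x y : Fin m) (w : ZMod d → Fin m) (h : LinOccZ x y d w) :
    CycOcc x y d w := by
  obtain ⟨i, h, h1, h2⟩ := h
  refine ⟨(i : ZMod d), h1, ?_⟩
  rwa [show ((i : ZMod d) + 1) = ((i + 1 : ℕ) : ZMod d) by push_cast; ring]

end Aux

theorem stmt9_aux_step1 (m d : ℕ) (hd : 2 ≤ d) (x y : Fin m) :
    Nat.card {w : ZMod d → Fin m // CycOcc x y d w} =
      Nat.card {w : ZMod d → Fin m // LinOccZ x y d w} +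
      Nat.card {w : ZMod d → Fin m // CycOcc x y d w ∧ ¬ LinOccZ x y d w} := by
  classical
  haveI : NeZero d := ⟨by omega⟩
  have key : ∀ w : ZMod d → Fin m,
      CycOcc x y d w ↔ LinOccZ x y d w ∨ (CycOcc x y d w ∧ ¬ LinOccZ x y d w) := by
    intro w
    constructor
    · intro hp
      by_cases hq : LinOccZ x y d w
      · exact Or.inl hq
      · exact Or.inr ⟨hp, hq⟩
    · rintro (hq | ⟨hp, -⟩)
      · exact linOccZ_to_cyc x y w hq
      · exact hp
  rw [Nat.card_congr (Equiv.subtypeEquivRight key)]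
  rw [Nat.card_eq_fintype_card, Nat.card_eq_fintype_card, Nat.card_eq_fintype_card]
  exact Fintype.card_subtype_or_disjoint _ _
    (by intro r hr1 hr2 w hw; exact (hr2 w hw).2 (hr1 w hw))

theorem stmt9_aux_step2 (m d : ℕ) (hd : 2 ≤ d) (x y : Fin m) :
    Nat.card {w : ZMod d → Fin m // LinOccZ x y d w} =
      Nat.card {v : Fin d → Fin m // LinOcc x y d v} := by
  haveI : NeZero d := ⟨by omega⟩
  refine Nat.card_congr ?_
  refine
    { toFun := fun w => ⟨fun j => w.1 (j.1 : ZMod d), ?_⟩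
      invFun := fun v => ⟨fun z => v.1 ⟨z.val, ZMod.val_lt z⟩, ?_⟩
      left_inv := ?_, right_inv := ?_ }
  · obtain ⟨i, h, h1, h2⟩ := w.2
    exact ⟨i, h, h1, h2⟩
  · obtain ⟨i, h, h1, h2⟩ := v.2
    refine ⟨i, h, ?_, ?_⟩
    · show v.1 ⟨((i : ZMod d)).val, ZMod.val_lt _⟩ = x
      rw [show (⟨((i : ZMod d)).val, ZMod.val_lt _⟩ : Fin d) = ⟨i, Nat.lt_of_succ_lt h⟩ by
        ext; exact ZMod.val_cast_of_lt (Nat.lt_of_succ_lt h)]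
      exact h1
    · show v.1 ⟨(((i + 1 : ℕ) : ZMod d)).val, ZMod.val_lt _⟩ = y
      rw [show (⟨(((i + 1 : ℕ) : ZMod d)).val, ZMod.val_lt _⟩ : Fin d) = ⟨i + 1, h⟩ by
        ext; exact ZMod.val_cast_of_lt h]
      exact h2
  · rintro ⟨w, hw⟩
    ext z
    simp only
    rw [ZMod.natCast_rightInverse z]
  · rintro ⟨v, hv⟩
    apply Subtype.ext
    funext j
    show v ⟨((j.1 : ZMod d)).val, ZMod.val_lt _⟩ = v j
    congr 1
    ext
    exact ZMod.val_cast_of_lt j.2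

theorem cast_dsub1_add_one (d : ℕ) (hd : 2 ≤ d) :
    (((d - 1 : ℕ) : ZMod d) + 1) = (0 : ZMod d) := by
  rw [show ((d - 1 : ℕ) : ZMod d) + 1 = ((d - 1 + 1 : ℕ) : ZMod d) by push_cast; ring,
    show d - 1 + 1 = d by omega, ZMod.natCast_self]

theorem stmt9_aux_step3 (m d : ℕ) (hd : 2 ≤ d) (x y : Fin m) (w : ZMod d → Fin m) :
    (CycOcc x y d w ∧ ¬ LinOccZ x y d w) ↔
      (w ((d - 1 : ℕ) : ZMod d) = x ∧ w 0 = y ∧ ¬ LinOccZ x y d w) := by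
  haveI : NeZero d := ⟨by omega⟩
  constructor
  · rintro ⟨⟨i, h1, h2⟩, hq⟩
    have hk : i.val < d := ZMod.val_lt i
    have hiv : ((i.val : ℕ) : ZMod d) = i := ZMod.natCast_rightInverse i
    by_cases hlt : i.val + 1 < d
    · exact absurd ⟨i.val, hlt, by rwa [hiv], by
        rwa [show ((i.val + 1 : ℕ) : ZMod d) = i + 1 by push_cast [hiv]; ring]⟩ hq
    · have hkd : i.val = d - 1 := by omega
      have hi : i = ((d - 1 : ℕ) : ZMod d) := by rw [← hiv, hkd]
      refine ⟨by rwa [hi] at h1, ?_, hq⟩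
      rw [hi, cast_dsub1_add_one d hd] at h2
      exact h2
  · rintro ⟨h1, h2, hq⟩
    refine ⟨⟨((d - 1 : ℕ) : ZMod d), h1, ?_⟩, hq⟩
    rw [cast_dsub1_add_one d hd]
    exact h2

def extW {m : ℕ} (d : ℕ) (hd : 2 ≤ d) (x y : Fin m) (u : Fin (d - 2) → Fin m)
    (z : ZMod d) : Fin m :=
  if h0 : z = 0 then y
  else if h1 : z = ((d - 1 : ℕ) : ZMod d) then x
  else u ⟨z.val - 1, by
    haveI : NeZero d := ⟨by omega⟩
    have hz : z.val < d := ZMod.val_lt z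
    have hz0 : z.val ≠ 0 := fun h => h0 ((ZMod.val_eq_zero z).1 h)
    have hz1 : z.val ≠ d - 1 := fun h =>
      h1 (by rw [← h]; exact (ZMod.natCast_rightInverse z).symm)
    omega⟩

theorem extW_zero {m : ℕ} (d : ℕ) (hd : 2 ≤ d) (x y : Fin m) (u : Fin (d - 2) → Fin m) :
    extW d hd x y u 0 = y := dif_pos rfl

theorem cast_dsub1_ne_zero (d : ℕ) (hd : 2 ≤ d) : (((d - 1 : ℕ)) : ZMod d) ≠ 0 := by
  haveI : NeZero d := ⟨by omega⟩
  intro h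
  have hv := ZMod.val_cast_of_lt (show d - 1 < d by omega)
  rw [h, ZMod.val_zero] at hv
  omega

theorem extW_last {m : ℕ} (d : ℕ) (hd : 2 ≤ d) (x y : Fin m) (u : Fin (d - 2) → Fin m) :
    extW d hd x y u ((d - 1 : ℕ) : ZMod d) = x := by
  rw [extW, dif_neg (cast_dsub1_ne_zero d hd), dif_pos rfl]

theorem extW_mid {m : ℕ} (d : ℕ) (hd : 2 ≤ d) (x y : Fin m) (u : Fin (d - 2) → Fin m)
    (i : ℕ) (h1 : 1 ≤ i) (h2 : i < d - 1) :
    extW d hd x y u ((i : ℕ) : ZMod d) = u ⟨i - 1, by omega⟩ := by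
  haveI : NeZero d := ⟨by omega⟩
  have hv : ((i : ZMod d)).val = i := ZMod.val_cast_of_lt (by omega)
  have h0 : (i : ZMod d) ≠ 0 := fun h => by rw [h, ZMod.val_zero] at hv; omega
  have hd1 : (i : ZMod d) ≠ ((d - 1 : ℕ) : ZMod d) := fun h => by
    rw [h, ZMod.val_cast_of_lt (show d - 1 < d by omega)] at hv; omega
  rw [extW, dif_neg h0, dif_neg hd1]
  congr 1
  ext
  simp [hv]

theorem stmt9_aux_step4 (m d : ℕ) (hd : 2 ≤ d) (x y : Fin m) (hxy : x ≠ y) :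
    Nat.card {w : ZMod d → Fin m //
        w ((d - 1 : ℕ) : ZMod d) = x ∧ w 0 = y ∧ ¬ LinOccZ x y d w} =
      Nat.card {u : Fin (d - 2) → Fin m // ¬ LinOcc x y (d - 2) u} := by
  haveI : NeZero d := ⟨by omega⟩
  refine Nat.card_congr ?_
  refine
    { toFun := fun w => ⟨fun j => w.1 ((j.1 + 1 : ℕ) : ZMod d), ?_⟩
      invFun := fun u => ⟨extW d hd x y u.1, extW_last d hd x y u.1,
        extW_zero d hd x y u.1, ?_⟩
      left_inv := ?_, right_inv := ?_ }
  · -- inner word avoids the factor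
    rintro ⟨j, h, hx', hy'⟩
    refine w.2.2.2 ⟨j + 1, by omega, hx', ?_⟩
    exact hy'
  · -- extW avoids LinOccZ
    rintro ⟨i, h, hx', hy'⟩
    rcases Nat.eq_zero_or_pos i with hi0 | hi1
    · subst hi0
      rw [Nat.cast_zero, extW_zero] at hx'
      exact hxy hx'.symm
    · have hiup : i < d - 1 := by omega
      rw [extW_mid d hd x y u.1 i hi1 hiup] at hx'
      by_cases hend : i + 1 = d - 1
      · rw [hend, extW_last] at hy'
        exact hxy hy'
      · have h2 : i + 1 < d - 1 := by omega
        rw [extW_mid d hd x y u.1 (i + 1) (by omega) h2] at hy'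
        refine u.2 ⟨i - 1, by omega, hx', ?_⟩
        rw [show (⟨i - 1 + 1, by omega⟩ : Fin (d - 2)) = ⟨i + 1 - 1, by omega⟩ from
          Fin.ext (show i - 1 + 1 = i + 1 - 1 by omega)]
        exact hy'
  · rintro ⟨w, hw1, hw2, hw3⟩
    apply Subtype.ext
    funext z
    show extW d hd x y _ z = w z
    by_cases h0 : z = 0
    · rw [h0, extW_zero, hw2]
    · by_cases h1 : z = ((d - 1 : ℕ) : ZMod d)
      · rw [h1, extW_last, hw1]
      · have hz : z.val < d := ZMod.val_lt z
        have hz0 : z.val ≠ 0 := fun h => h0 ((ZMod.val_eq_zero z).1 h)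
        have hz1 : z.val ≠ d - 1 := fun h =>
          h1 (by rw [← h]; exact (ZMod.natCast_rightInverse z).symm)
        have hzz : ((z.val : ℕ) : ZMod d) = z := ZMod.natCast_rightInverse z
        calc extW d hd x y _ z = extW d hd x y _ ((z.val : ℕ) : ZMod d) := by rw [hzz]
          _ = w ((((⟨z.val - 1, by omega⟩ : Fin (d - 2)).1 + 1 : ℕ)) : ZMod d) :=
              extW_mid d hd x y _ z.val (by omega) (by omega)
          _ = w z := by
              rw [show ((⟨z.val - 1, by omega⟩ : Fin (d - 2)).1 + 1 : ℕ) = z.val by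
                simp; omega, hzz]
  · rintro ⟨u, hu⟩
    apply Subtype.ext
    funext j
    show extW d hd x y u ((j.1 + 1 : ℕ) : ZMod d) = u j
    rw [extW_mid d hd x y u (j.1 + 1) (by omega) (by have := j.2; omega)]
    exact congrArg u (Fin.ext (show j.1 + 1 - 1 = j.1 by omega))

theorem stmt9_aux_step5 (m n : ℕ) (x y : Fin m) :
    Nat.card {u : Fin n → Fin m // ¬ LinOcc x y n u} =
      m ^ n - Nat.card {u : Fin n → Fin m // LinOcc x y n u} := by
  classical
  rw [Nat.card_eq_fintype_card, Nat.card_eq_fintype_card, Fintype.card_subtype_compl]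
  congr 1
  simp [Fintype.card_fun]

/-- `R_c(d) = W_{12}(d) + W_{¬12}(d−2)`: the number of cyclic words of length `d`
containing a cyclic occurrence of the factor `12` equals the number of linear words of
length `d` containing a linear occurrence of `12` plus the number of linear words of
length `d−2` with no linear occurrence of `12` (the latter being `m^{d−2} − W_{12}(d−2)`). -/
theorem stmt_9 (m d : ℕ) (hm : 2 ≤ m) (hd : 2 ≤ d) (x y : Fin m) (hxy : x ≠ y) :
    Nat.card {w : ZMod d → Fin m // ∃ i : ZMod d, w i = x ∧ w (i + 1) = y} =
      Nat.card {v : Fin d → Fin m // ∃ i : ℕ, ∃ h : i + 1 < d,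
          v ⟨i, Nat.lt_of_succ_lt h⟩ = x ∧ v ⟨i + 1, h⟩ = y} +
      (m ^ (d - 2) -
        Nat.card {v : Fin (d - 2) → Fin m // ∃ i : ℕ, ∃ h : i + 1 < d - 2,
          v ⟨i, Nat.lt_of_succ_lt h⟩ = x ∧ v ⟨i + 1, h⟩ = y}) := by
  show Nat.card {w : ZMod d → Fin m // CycOcc x y d w} =
      Nat.card {v : Fin d → Fin m // LinOcc x y d v} +
      (m ^ (d - 2) - Nat.card {v : Fin (d - 2) → Fin m // LinOcc x y (d - 2) v})
  rw [stmt9_aux_step1 m d hd x y, stmt9_aux_step2 m d hd x y,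
    Nat.card_congr (Equiv.subtypeEquivRight (fun w => stmt9_aux_step3 m d hd x y w)),
    stmt9_aux_step4 m d hd x y hxy, stmt9_aux_step5 m (d - 2) x y]
end

section
/- Fix integers m ≥ 2 and r ≥ 1, and fix two distinct letters 1 and 2 in the alphabet Fin m. Let N_{¬12}(r) be the number of necklaces of length r over Fin m containing no cyclic occurrence of the factor 12. Then r · N_{¬12}(r) ≥ (m − 1)^r. In particular, N_{¬12}(r) ≥ (m − 1)^r / r, so the number of such necklaces grows exponentially in r. -/
/-- The number `N_{¬12}(r)` of necklaces of length `r` over an `m`-letter alphabet with no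
cyclic occurrence of the factor `12` satisfies `r · N_{¬12}(r) ≥ (m − 1)^r`; in particular
`N_{¬12}(r) ≥ (m − 1)^r / r`. -/
theorem stmt_12 (m r : ℕ) (hm : 2 ≤ m) (hr : 1 ≤ r) (x y : Fin m) (hxy : x ≠ y) :
    (m - 1) ^ r ≤ r * Nat.card (Quot (fun w w' :
        {w : ZMod r → Fin m // ¬ ∃ i : ZMod r, w i = x ∧ w (i + 1) = y} =>
        ∃ k : ℤ, ∀ i : ZMod r, w'.1 i = w.1 (i + (k : ZMod r)))) ∧
    (m - 1) ^ r / r ≤ Nat.card (Quot (fun w w' :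
        {w : ZMod r → Fin m // ¬ ∃ i : ZMod r, w i = x ∧ w (i + 1) = y} =>
        ∃ k : ℤ, ∀ i : ZMod r, w'.1 i = w.1 (i + (k : ZMod r)))) := by
  haveI : NeZero r := ⟨by omega⟩
  set S := {w : ZMod r → Fin m // ¬ ∃ i : ZMod r, w i = x ∧ w (i + 1) = y} with hS
  set rel : S → S → Prop := fun w w' =>
      ∃ k : ℤ, ∀ i : ZMod r, w'.1 i = w.1 (i + (k : ZMod r)) with hrel
  have hequiv : Equivalence rel := by
    constructor
    · intro w; exact ⟨0, fun i => by simp⟩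
    · rintro w w' ⟨k, hk⟩
      refine ⟨-k, fun i => ?_⟩
      rw [hk]
      congr 1
      push_cast
      ring
    · rintro a b c ⟨k, hk⟩ ⟨l, hl⟩
      refine ⟨k + l, fun i => ?_⟩
      rw [hl, hk]
      congr 1
      push_cast
      ring
  have hmk : ∀ w w' : S, Quot.mk rel w = Quot.mk rel w' → rel w w' := by
    intro w w' h
    exact (hequiv.eqvGen_iff).mp (Quot.eq.mp h)
  -- lower bound on the number of words
  have h1 : (m - 1) ^ r ≤ Nat.card S := by
    have hinj : Function.Injective (fun g : ZMod r → {z : Fin m // z ≠ y} =>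
        (⟨fun i => (g i).1, by
          rintro ⟨i, hi1, hi2⟩
          exact (g (i + 1)).2 hi2⟩ : S)) := by
      intro g g' h
      funext i
      have := congrArg (fun w : S => w.1 i) h
      exact Subtype.ext this
    calc (m - 1) ^ r = Nat.card (ZMod r → {z : Fin m // z ≠ y}) := by
          simp only [Nat.card_eq_fintype_card, Fintype.card_fun]
          congr 1
          · rw [Fintype.card_subtype_compl, Fintype.card_subtype_eq, Fintype.card_fin]
          · exact (ZMod.card r).symm
      _ ≤ Nat.card S := Nat.card_le_card_of_injective _ hinj
  -- upper bound: each class has at most r elements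
  have h2 : Nat.card S ≤ Nat.card (Quot rel) * r := by
    have key : ∀ w : S, ∃ k : ZMod r, ∀ i : ZMod r,
        w.1 i = (Quot.mk rel w).out.1 (i + k) := by
      intro w
      obtain ⟨k, hk⟩ := hmk _ _ ((Quot.mk rel w).out_eq.trans rfl : Quot.mk rel _ = Quot.mk rel w)
      exact ⟨(k : ZMod r), hk⟩
    choose K hK using key
    have hinj : Function.Injective (fun w : S => (Quot.mk rel w, K w)) := by
      intro w w' h
      have hq : Quot.mk rel w = Quot.mk rel w' := (Prod.ext_iff.mp h).1
      have hk : K w = K w' := (Prod.ext_iff.mp h).2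
      refine Subtype.ext (funext fun i => ?_)
      rw [hK w i, hK w' i, hq, hk]
    calc Nat.card S ≤ Nat.card (Quot rel × ZMod r) := Nat.card_le_card_of_injective _ hinj
      _ = Nat.card (Quot rel) * r := by rw [Nat.card_prod, Nat.card_zmod]
  have main : (m - 1) ^ r ≤ r * Nat.card (Quot rel) := by
    calc (m - 1) ^ r ≤ Nat.card S := h1
      _ ≤ Nat.card (Quot rel) * r := h2
      _ = r * Nat.card (Quot rel) := Nat.mul_comm _ _
  refine ⟨main, ?_⟩
  calc (m - 1) ^ r / r ≤ r * Nat.card (Quot rel) / r := Nat.div_le_div_right main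
    _ = Nat.card (Quot rel) := Nat.mul_div_cancel_left _ (by omega)
end

section
/- Fix an integer m ≥ 2 and two distinct letters 1 and 2 in the alphabet Fin m. For every natural number d, the number of words v : Fin d → Fin m with no linear occurrence of the factor 12 (i.e., no index i with i+1 < d, v(i) = 1 and v(i+1) = 2) equals the coefficient of t^d in the formal power series (1 − m·t + t²)⁻¹ ∈ ℤ⟦t⟧. Equivalently, the number W_{12}(d) of length-d words containing a linear occurrence of 12 equals the coefficient of t^d in t²·((1 − m·t)·(1 − m·t + t²))⁻¹. -/
/-!
Appending a letter `c` to a `12`-free word `u` of length `n + 1` produces a `12`-free word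
unless `u` ends in `1` and `c = 2`, and since `1 ≠ 2` the `12`-free words of length `n + 1`
ending in `1` are exactly those of length `n` followed by `1`. Hence the numbers `a d` of
`12`-free words satisfy `a (n + 2) + a n = m * a (n + 1)` with `a 0 = 1`, `a 1 = m`, which says
`(∑ a d t^d) * (1 - m t + t²) = 1`. The words containing `12` number `m^d - a d`, and
`t² / ((1 - m t)(1 - m t + t²)) = 1 / (1 - m t) - 1 / (1 - m t + t²)`.
-/

open PowerSeries

theorem Ring.inverse_eq_of_mul_eq_one {M₀ : Type*} [CommMonoidWithZero M₀] {a b : M₀}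
    (h : b * a = 1) : Ring.inverse a = b := by
  rw [← one_mul (Ring.inverse a), ← h,
    Ring.mul_inverse_cancel_right _ _ (.of_mul_eq_one_right _ h)]

namespace PowerSeries

variable {R : Type*} [CommRing R]

theorem mk_pow_mul_one_sub_C_mul_X (a : R) : mk (a ^ ·) * (1 - C a * X) = 1 := by
  simpa [rescale_mk, rescale_X] using congrArg (rescale a) (mk_one_mul_one_sub_eq_one R)

theorem mk_mul_one_sub_C_mul_X_add_X_sq {a : R} {f : ℕ → R} (h0 : f 0 = 1) (h1 : f 1 = a)
    (hrec : ∀ n, f (n + 2) = a * f (n + 1) - f n) : mk f * (1 - C a * X + X ^ 2) = 1 := by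
  ext (_ | _ | n) <;>
    simp [sq, mul_add, mul_sub, ← mul_assoc, mul_comm _ (C a), coeff_succ_mul_X, h0, h1, hrec]

theorem X_sq_mul_inverse_one_sub_C_mul_X_mul (a : R) :
    X ^ 2 * Ring.inverse ((1 - C a * X) * (1 - C a * X + X ^ 2)) =
      mk (a ^ ·) - Ring.inverse (1 - C a * X + X ^ 2) := by
  have hG : IsUnit (1 - C a * X) := .of_mul_eq_one_right _ (mk_pow_mul_one_sub_C_mul_X a)
  have hS : IsUnit (1 - C a * X + X ^ 2) := by
    simp [isUnit_iff_constantCoeff]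
  rw [← Ring.inverse_eq_of_mul_eq_one (mk_pow_mul_one_sub_C_mul_X a),
    Ring.inverse_sub_inverse (iff_of_true hG hS), Ring.mul_inverse_rev]
  ring

end PowerSeries

variable {α : Type*}

def HasFactor {d : ℕ} (x y : α) (v : Fin d → α) : Prop :=
  ∃ i : ℕ, ∃ h : i + 1 < d, v ⟨i, Nat.lt_of_succ_lt h⟩ = x ∧ v ⟨i + 1, h⟩ = y

abbrev FactorFreeWord (x y : α) (d : ℕ) : Type _ := {v : Fin d → α // ¬HasFactor x y v}

namespace HasFactor

variable {x y : α}

theorem snoc_iff {n : ℕ} (u : Fin n → α) (c : α) :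
    HasFactor x y (Fin.snoc u c : Fin (n + 1) → α) ↔
      HasFactor x y u ∨ ∃ h : 0 < n, u ⟨n - 1, Nat.sub_lt h one_pos⟩ = x ∧ c = y := by
  simp only [HasFactor, Fin.snoc]
  constructor
  · rintro ⟨i, h, hx, hy⟩
    by_cases hi : i + 1 < n
    · exact .inl ⟨i, hi, by simpa [hi, show i < n by omega] using hx, by simpa [hi] using hy⟩
    · obtain rfl : n = i + 1 := by omega
      exact .inr ⟨by omega, by simpa using hx, by simpa using hy⟩
  · rintro (⟨i, h, hx, hy⟩ | ⟨h, hx, hy⟩)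
    · exact ⟨i, by omega, by simpa [h, show i < n by omega] using hx, by simpa [h] using hy⟩
    · exact ⟨n - 1, by omega, by simpa [h] using hx,
        by simpa [show n - 1 + 1 = n by omega] using hy⟩

theorem snoc_iff_of_ne {n : ℕ} (u : Fin n → α) {c : α} (hc : c ≠ y) :
    HasFactor x y (Fin.snoc u c : Fin (n + 1) → α) ↔ HasFactor x y u := by
  simp [snoc_iff, hc]

theorem snoc_succ_iff {n : ℕ} (u : Fin (n + 1) → α) (c : α) :
    HasFactor x y (Fin.snoc u c : Fin (n + 2) → α) ↔
      HasFactor x y u ∨ u (Fin.last n) = x ∧ c = y := by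
  simp [snoc_iff, Fin.last]

theorem iff_init {n : ℕ} (v : Fin (n + 2) → α) :
    HasFactor x y v ↔
      HasFactor x y (Fin.init v) ∨ Fin.init v (Fin.last n) = x ∧ v (Fin.last (n + 1)) = y := by
  conv_lhs => rw [← Fin.snoc_init_self v]
  exact snoc_succ_iff _ _

theorem not_of_lt_two {d : ℕ} (hd : d < 2) (v : Fin d → α) : ¬HasFactor x y v := by
  rintro ⟨i, h, -⟩
  omega

end HasFactor

namespace FactorFreeWord

variable (x y : α)

def snocEquiv (n : ℕ) :
    FactorFreeWord x y (n + 2) ≃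
      {p : FactorFreeWord x y (n + 1) × α // ¬(p.1.1 (Fin.last n) = x ∧ p.2 = y)} where
  toFun v := ⟨(⟨Fin.init v.1, fun h => v.2 ((HasFactor.iff_init _).2 (.inl h))⟩,
    v.1 (Fin.last _)), fun h => v.2 ((HasFactor.iff_init _).2 (.inr h))⟩
  invFun p := ⟨Fin.snoc p.1.1.1 p.1.2, by
    rw [HasFactor.snoc_succ_iff]; exact not_or.2 ⟨p.1.1.2, p.2⟩⟩
  left_inv v := Subtype.ext (Fin.snoc_init_self v.1)
  right_inv p := by simp

variable {x y}

def snocEndEquiv (hxy : x ≠ y) (n : ℕ) :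
    FactorFreeWord x y n ≃
      {p : FactorFreeWord x y (n + 1) × α // p.1.1 (Fin.last n) = x ∧ p.2 = y} where
  toFun u := ⟨(⟨Fin.snoc u.1 x, by rw [HasFactor.snoc_iff_of_ne _ hxy]; exact u.2⟩, y),
    by simp⟩
  invFun p := ⟨Fin.init p.1.1.1, fun h => p.1.1.2 <| by
    rw [← Fin.snoc_init_self p.1.1.1, p.2.1, HasFactor.snoc_iff_of_ne _ hxy]; exact h⟩
  left_inv u := by simp
  right_inv := by
    rintro ⟨⟨⟨v, hv⟩, c⟩, hvx, hc⟩
    dsimp only at hvx hc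
    subst hc hvx
    simp

theorem card_of_lt_two {d : ℕ} (hd : d < 2) :
    Nat.card (FactorFreeWord x y d) = Nat.card α ^ d := by
  rw [Nat.card_congr (Equiv.subtypeUnivEquiv (HasFactor.not_of_lt_two hd)), Nat.card_fun,
    Nat.card_fin]

variable [Finite α]

theorem card_add_two (hxy : x ≠ y) (n : ℕ) :
    Nat.card (FactorFreeWord x y (n + 2)) + Nat.card (FactorFreeWord x y n) =
      Nat.card (FactorFreeWord x y (n + 1)) * Nat.card α := by
  classical
  rw [add_comm, ← Nat.card_prod, Nat.card_congr (snocEquiv x y n),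
    Nat.card_congr (snocEndEquiv hxy n), ← Nat.card_sum, Nat.card_congr (Equiv.sumCompl _)]

theorem card_hasFactor_add_card (d : ℕ) :
    Nat.card {v : Fin d → α // HasFactor x y v} + Nat.card (FactorFreeWord x y d) =
      Nat.card α ^ d := by
  classical
  rw [← Nat.card_sum, Nat.card_congr (Equiv.sumCompl _), Nat.card_fun, Nat.card_fin]

theorem inverse_one_sub_C_mul_X_add_X_sq (hxy : x ≠ y) :
    Ring.inverse (1 - C (Nat.card α : ℤ) * X + X ^ 2) =
      mk fun d => (Nat.card (FactorFreeWord x y d) : ℤ) := by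
  refine Ring.inverse_eq_of_mul_eq_one (mk_mul_one_sub_C_mul_X_add_X_sq ?_ ?_ fun n => ?_)
  · simp [card_of_lt_two]
  · simp [card_of_lt_two]
  · rw [eq_sub_iff_add_eq, mul_comm]
    exact_mod_cast card_add_two hxy n

end FactorFreeWord

theorem stmt_14_general (m : ℕ) (x y : Fin m) (hxy : x ≠ y) (d : ℕ) :
    (Nat.card {v : Fin d → Fin m // ¬ ∃ i : ℕ, ∃ h : i + 1 < d,
        v ⟨i, Nat.lt_of_succ_lt h⟩ = x ∧ v ⟨i + 1, h⟩ = y} : ℤ) =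
      PowerSeries.coeff (R := ℤ) d
        (Ring.inverse (1 - PowerSeries.C (R := ℤ) (m : ℤ) * PowerSeries.X + PowerSeries.X ^ 2 :
          PowerSeries ℤ)) ∧
    (Nat.card {v : Fin d → Fin m // ∃ i : ℕ, ∃ h : i + 1 < d,
        v ⟨i, Nat.lt_of_succ_lt h⟩ = x ∧ v ⟨i + 1, h⟩ = y} : ℤ) =
      PowerSeries.coeff (R := ℤ) d
        (PowerSeries.X ^ 2 *
          Ring.inverse ((1 - PowerSeries.C (R := ℤ) (m : ℤ) * PowerSeries.X) *
            (1 - PowerSeries.C (R := ℤ) (m : ℤ) * PowerSeries.X + PowerSeries.X ^ 2) :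
            PowerSeries ℤ)) := by
  have hgen := FactorFreeWord.inverse_one_sub_C_mul_X_add_X_sq hxy
  rw [Nat.card_fin] at hgen
  have hcount : (Nat.card {v : Fin d → Fin m // HasFactor x y v} : ℤ) + Nat.card (FactorFreeWord x y d) =
      (m : ℤ) ^ d := by
    exact_mod_cast Nat.card_fin m ▸ FactorFreeWord.card_hasFactor_add_card d
  refine ⟨by rw [hgen, coeff_mk]; rfl, ?_⟩
  rw [X_sq_mul_inverse_one_sub_C_mul_X_mul, hgen, map_sub, coeff_mk, coeff_mk, ← hcount,
    add_sub_cancel_right]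
  rfl

/-- The number of linear words of length `d` over an `m`-letter alphabet with no linear
occurrence of the factor `12` equals the coefficient of `t^d` in `(1 − m·t + t²)⁻¹ ∈ ℤ⟦t⟧`;
equivalently, the number `W_{12}(d)` of length-`d` words containing a linear occurrence of
`12` equals the coefficient of `t^d` in `t² · ((1 − m·t)(1 − m·t + t²))⁻¹`. -/
theorem stmt_14 (m : ℕ) (hm : 2 ≤ m) (x y : Fin m) (hxy : x ≠ y) (d : ℕ) :
    (Nat.card {v : Fin d → Fin m // ¬ ∃ i : ℕ, ∃ h : i + 1 < d,
        v ⟨i, Nat.lt_of_succ_lt h⟩ = x ∧ v ⟨i + 1, h⟩ = y} : ℤ) =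
      PowerSeries.coeff (R := ℤ) d
        (Ring.inverse (1 - PowerSeries.C (R := ℤ) (m : ℤ) * PowerSeries.X + PowerSeries.X ^ 2 :
          PowerSeries ℤ)) ∧
    (Nat.card {v : Fin d → Fin m // ∃ i : ℕ, ∃ h : i + 1 < d,
        v ⟨i, Nat.lt_of_succ_lt h⟩ = x ∧ v ⟨i + 1, h⟩ = y} : ℤ) =
      PowerSeries.coeff (R := ℤ) d
        (PowerSeries.X ^ 2 *
          Ring.inverse ((1 - PowerSeries.C (R := ℤ) (m : ℤ) * PowerSeries.X) *
            (1 - PowerSeries.C (R := ℤ) (m : ℤ) * PowerSeries.X + PowerSeries.X ^ 2) :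
            PowerSeries ℤ)) :=
  stmt_14_general m x y hxy d
end
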